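/- arXiv:1509.08502 — 5 statements merged into one kernel-verified Lean document; each statement's English description precedes it below -/
import Mathlib

section
/- In any implication zroupoid satisfying x'' = x, the identity (x → 0') → y = (x → y') → y holds. -/
theorem stmt0 (A : Type*) (imp : A → A → A) (z : A)
    (hI : ∀ x y w : A, imp (imp x y) w = imp (imp (imp (imp w z) x) (imp (imp y w) z)) z)
    (hI0 : imp (imp z z) z = z)
    (hInv : ∀ x : A, imp (imp x z) z = x) :
    ∀ x y : A, imp (imp x (imp z z)) y = imp (imp x (imp y z)) y := by
  -- E1 : x → y = (z' → x) → y
  have e1 : ∀ x y : A, imp x y = imp (imp (imp z z) x) y := by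
    intro x y
    have h := hI x y z
    rw [hInv y] at h
    have h2 := congrArg (fun t => imp t z) h
    simpa only [hInv] using h2
  have key : ∀ y : A, imp (imp (imp y z) y) z = imp y z := by
    intro y
    calc imp (imp (imp y z) y) z
      _ = imp (imp (imp (imp (imp y z) y) z) z) z := by
        conv_rhs => rw [hInv (imp (imp (imp y z) y) z)]
      _ = imp (imp (imp (imp (imp (imp (imp y z) z) z) y) z) z) z := by
        conv_rhs => enter [1,1,1,1]; rw [hInv (imp y z)]
      _ = imp (imp (imp (imp (imp (imp (imp y z) z) z) (imp (imp y z) z)) z) z) z := by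
        conv_rhs => enter [1,1,1,2]; rw [hInv (y)]
      _ = imp (imp (imp (imp (imp (imp (imp y z) z) z) (imp (imp (imp z z) (imp y z)) z)) z) z) z := by
        conv_rhs => enter [1,1,1,2]; rw [← e1 (imp y z) (z)]
      _ = imp (imp (imp (imp z (imp z z)) (imp y z)) z) z := by
        conv_lhs => enter [1,1]; rw [← hI (z) (imp z z) (imp y z)]
      _ = imp (imp (imp (imp (imp (imp z (imp z z)) z) z) (imp y z)) z) z := by
        conv_rhs => enter [1,1,1]; rw [hInv (imp z (imp z z))]
      _ = imp (imp (imp (imp (imp (imp z z) (imp (imp z (imp z z)) z)) z) (imp y z)) z) z := by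
        conv_rhs => enter [1,1,1]; rw [← e1 (imp (imp z (imp z z)) z) (z)]
      _ = imp (imp (imp (imp (imp (imp (imp (imp z z) z) z) (imp (imp z (imp z z)) z)) z) (imp y z)) z) z := by
        conv_rhs => enter [1,1,1,1,1]; rw [hInv (imp z z)]
      _ = imp (imp (imp (imp (imp z z) (imp z z)) (imp y z)) z) z := by
        conv_lhs => enter [1,1,1]; rw [← hI (z) (z) (imp z z)]
      _ = imp (imp (imp (imp z z) (imp y z)) z) z := by
        conv_lhs => enter [1,1]; rw [← e1 (imp z z) (imp y z)]
      _ = imp (imp (imp y z) z) z := by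
        conv_lhs => enter [1]; rw [← e1 (imp y z) (z)]
      _ = imp y z := by
        conv_lhs => rw [hInv (imp y z)]
  intro x y
  rw [hI x (imp z z) y, hI x (imp y z) y, ← e1 y z, key y]
end

section
/- In any implication zroupoid satisfying x'' = x, the identity (x → (y → x)')' = (x → y) → x holds. -/
/-!
Taking `w = x` in (I) gives `(x → y) → x = ((x' → x) → (y → x)')'`, so it suffices that
`x' → x = x`. Since `'` is an involution it is injective; (I) at `w = 0` then shows that
`0'` is a left unit for `→`. With this, (I) at `(0, 0, 0')` gives `0 → 0' = 0'`, and (I) at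
`(0, 0', a)` collapses to `a = (a → a')'`, i.e. `a → a' = a'`; applying this to `a'` gives `a' → a = a`.
-/

namespace ImplicationZroupoid

variable {A : Type*} {imp : A → A → A} {z : A}

local infixr:60 " ⇒ " => imp

local notation:max x "′" => imp x z

theorem neg_injective (hInv : ∀ x, x′′ = x) : Function.Injective (fun x => x′) :=
  Function.LeftInverse.injective (g := fun x => x′) hInv

theorem neg_zero_imp_imp (hI : ∀ x y w, (x ⇒ y) ⇒ w = ((w′ ⇒ x) ⇒ (y ⇒ w)′)′)
    (hInv : ∀ x, x′′ = x) (a b : A) : (z′ ⇒ a) ⇒ b = a ⇒ b := by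
  refine neg_injective hInv ?_
  simpa only [hInv] using (hI a b z).symm

theorem neg_zero_imp (hI : ∀ x y w, (x ⇒ y) ⇒ w = ((w′ ⇒ x) ⇒ (y ⇒ w)′)′)
    (hInv : ∀ x, x′′ = x) (a : A) : z′ ⇒ a = a :=
  neg_injective hInv (neg_zero_imp_imp hI hInv a z)

theorem zero_imp_neg_zero (hI : ∀ x y w, (x ⇒ y) ⇒ w = ((w′ ⇒ x) ⇒ (y ⇒ w)′)′)
    (hInv : ∀ x, x′′ = x) : z ⇒ z′ = z′ := by
  have h := hI z z z′
  rwa [hInv z, neg_zero_imp hI hInv, neg_zero_imp hI hInv, hInv, eq_comm] at h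

theorem imp_neg_self (hI : ∀ x y w, (x ⇒ y) ⇒ w = ((w′ ⇒ x) ⇒ (y ⇒ w)′)′)
    (hInv : ∀ x, x′′ = x) (a : A) : a ⇒ a′ = a′ := by
  have h := hI z z′ a
  rw [zero_imp_neg_zero hI hInv, neg_zero_imp hI hInv, hInv] at h
  calc a ⇒ a′ = (a ⇒ a′)′′ := (hInv _).symm
    _ = a′ := by rw [← h]

theorem neg_imp_self (hI : ∀ x y w, (x ⇒ y) ⇒ w = ((w′ ⇒ x) ⇒ (y ⇒ w)′)′)
    (hInv : ∀ x, x′′ = x) (a : A) : a′ ⇒ a = a := by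
  simpa only [hInv] using imp_neg_self hI hInv a′

end ImplicationZroupoid

open ImplicationZroupoid in
theorem stmt2_general (A : Type*) (imp : A → A → A) (z : A)
    (hI : ∀ x y w : A, imp (imp x y) w = imp (imp (imp (imp w z) x) (imp (imp y w) z)) z)
    (hInv : ∀ x : A, imp (imp x z) z = x) :
    ∀ x y : A, imp (imp x (imp (imp y x) z)) z = imp (imp x y) x := by
  intro x y
  rw [hI x y x, neg_imp_self hI hInv]

theorem stmt2 (A : Type*) (imp : A → A → A) (z : A)
    (hI : ∀ x y w : A, imp (imp x y) w = imp (imp (imp (imp w z) x) (imp (imp y w) z)) z)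
    (hI0 : imp (imp z z) z = z)
    (hInv : ∀ x : A, imp (imp x z) z = x) :
    ∀ x y : A, imp (imp x (imp (imp y x) z)) z = imp (imp x y) x :=
  stmt2_general A imp z hI hInv
end

section
/- In any implication zroupoid satisfying x'' = x, the identity x → ((y → x) → y) = x → y holds. -/
theorem stmt10 (A : Type*) (imp : A → A → A) (z : A)
    (hI : ∀ x y w : A, imp (imp x y) w = imp (imp (imp (imp w z) x) (imp (imp y w) z)) z)
    (hI0 : imp (imp z z) z = z)
    (hInv : ∀ x : A, imp (imp x z) z = x) :
    ∀ x y : A, imp x (imp (imp y x) y) = imp x y := by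
  have e2 : ∀ x1 x2 x3 : A, (imp (imp (imp (imp x1 z) x2) (imp (imp x3 x1) z)) z) = (imp (imp x2 x3) x1) := by
    intro x1 x2 x3
    calc (imp (imp (imp (imp x1 z) x2) (imp (imp x3 x1) z)) z)
      _ = (imp (imp x2 x3) x1) := by rw [hI x2 x3 x1]
  have e3 : ∀ x1 x2 x3 : A, (imp (imp (imp x1 z) x2) (imp (imp x3 x1) z)) = (imp (imp (imp x2 x3) x1) z) := by
    intro x1 x2 x3
    calc (imp (imp (imp x1 z) x2) (imp (imp x3 x1) z))
      _ = (imp (imp (imp (imp (imp x1 z) x2) (imp (imp x3 x1) z)) z) z) := by rw [hInv (imp (imp (imp x1 z) x2) (imp (imp x3 x1) z))]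
      _ = (imp (imp (imp x2 x3) x1) z) := by rw [hI x2 x3 x1]
  have e4 : ∀ x1 x2 x3 x4 : A, (imp (imp (imp (imp x1 x2) x3) (imp (imp x4 x1) x2)) z) = (imp (imp x3 (imp (imp x2 z) x4)) (imp (imp x1 x2) z)) := by
    intro x1 x2 x3 x4
    calc (imp (imp (imp (imp x1 x2) x3) (imp (imp x4 x1) x2)) z)
      _ = (imp (imp (imp (imp (imp (imp x1 x2) z) z) x3) (imp (imp x4 x1) x2)) z) := by rw [hInv (imp x1 x2)]
      _ = (imp (imp (imp (imp (imp (imp x1 x2) z) z) x3) (imp (imp (imp (imp x2 z) x4) (imp (imp x1 x2) z)) z)) z) := by rw [hI x4 x1 x2]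
      _ = (imp (imp x3 (imp (imp x2 z) x4)) (imp (imp x1 x2) z)) := by rw [hI x3 (imp (imp x2 z) x4) (imp (imp x1 x2) z)]
  have e5 : ∀ x1 x2 x3 : A, (imp (imp x1 (imp (imp z z) x2)) x3) = (imp (imp x1 x2) x3) := by
    intro x1 x2 x3
    calc (imp (imp x1 (imp (imp z z) x2)) x3)
      _ = (imp (imp x1 (imp (imp z z) x2)) (imp (imp x3 z) z)) := by rw [hInv x3]
      _ = (imp (imp (imp (imp x3 z) x1) (imp (imp x2 x3) z)) z) := by rw [e4 x3 z x1 x2]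
      _ = (imp (imp x1 x2) x3) := by rw [hI x1 x2 x3]
  have e7 : ∀ x1 x2 : A, (imp (imp (imp (imp z x1) x2) x1) z) = (imp (imp x2 x1) (imp (imp z x1) z)) := by
    intro x1 x2
    calc (imp (imp (imp (imp z x1) x2) x1) z)
      _ = (imp (imp (imp (imp z x1) x2) (imp (imp z z) x1)) z) := by rw [e5 (imp (imp z x1) x2) x1 z]
      _ = (imp (imp x2 (imp (imp x1 z) z)) (imp (imp z x1) z)) := by rw [e4 z x1 x2 z]
      _ = (imp (imp x2 x1) (imp (imp z x1) z)) := by rw [hInv x1]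
  have e8 : ∀ x1 x2 : A, (imp (imp x1 (imp (imp x2 x1) z)) z) = (imp (imp z x2) x1) := by
    intro x1 x2
    calc (imp (imp x1 (imp (imp x2 x1) z)) z)
      _ = (imp (imp (imp (imp x1 z) z) (imp (imp x2 x1) z)) z) := by rw [hInv x1]
      _ = (imp (imp z x2) x1) := by rw [hI z x2 x1]
  have e9 : ∀ x1 x2 : A, (imp x1 (imp (imp x2 x1) z)) = (imp (imp (imp z x2) x1) z) := by
    intro x1 x2
    calc (imp x1 (imp (imp x2 x1) z))
      _ = (imp (imp (imp x1 z) z) (imp (imp x2 x1) z)) := by rw [hInv x1]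
      _ = (imp (imp (imp z x2) x1) z) := by rw [e3 x1 z x2]
  have e11 : ∀ x1 : A, (imp (imp (imp z x1) (imp z z)) z) = (imp (imp x1 (imp z z)) z) := by
    intro x1
    calc (imp (imp (imp z x1) (imp z z)) z)
      _ = (imp (imp (imp (imp z z) (imp (imp x1 (imp z z)) z)) z) z) := by rw [e8 (imp z z) x1]
      _ = (imp (imp (imp (imp z z) (imp (imp x1 (imp z z)) z)) (imp (imp z z) z)) z) := by rw [e5 (imp (imp z z) (imp (imp x1 (imp z z)) z)) z z]
      _ = (imp (imp (imp (imp x1 (imp z z)) z) z) z) := by rw [hI (imp (imp x1 (imp z z)) z) z z]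
      _ = (imp (imp x1 (imp z z)) z) := by rw [hInv (imp (imp x1 (imp z z)) z)]
  have e12 : (imp z (imp z z)) = (imp z z) := by
    calc (imp z (imp z z))
      _ = (imp (imp (imp z (imp z z)) z) z) := by rw [hInv (imp z (imp z z))]
      _ = (imp (imp (imp (imp z z) (imp z z)) z) z) := by rw [e11 z]
      _ = (imp (imp (imp z z) z) (imp (imp z z) z)) := by rw [e7 z (imp z z)]
      _ = (imp (imp (imp z z) z) z) := by rw [e3 z z z]
      _ = (imp z z) := by rw [hInv (imp z z)]
  have e13 : ∀ x1 : A, (imp x1 (imp x1 z)) = (imp x1 z) := by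
    intro x1
    calc (imp x1 (imp x1 z))
      _ = (imp x1 (imp (imp (imp x1 z) z) z)) := by rw [hInv (imp x1 z)]
      _ = (imp x1 (imp (imp (imp z z) x1) (imp (imp z z) z))) := by rw [e3 z x1 z]
      _ = (imp x1 (imp (imp (imp z z) x1) z)) := by rw [hI0]
      _ = (imp (imp (imp z (imp z z)) x1) z) := by rw [e9 x1 (imp z z)]
      _ = (imp (imp (imp z z) x1) z) := by rw [e12]
      _ = (imp (imp (imp z z) x1) (imp (imp z z) z)) := by rw [hI0]
      _ = (imp (imp (imp x1 z) z) z) := by rw [e3 z x1 z]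
      _ = (imp x1 z) := by rw [hInv (imp x1 z)]
  have e14 : ∀ x1 : A, (imp (imp x1 z) (imp z z)) = (imp z x1) := by
    intro x1
    calc (imp (imp x1 z) (imp z z))
      _ = (imp (imp (imp (imp (imp z z) z) x1) (imp (imp z (imp z z)) z)) z) := by rw [hI x1 z (imp z z)]
      _ = (imp (imp (imp z x1) (imp (imp z (imp z z)) z)) z) := by rw [hI0]
      _ = (imp (imp (imp z x1) (imp (imp z z) z)) z) := by rw [e12]
      _ = (imp (imp (imp z x1) z) z) := by rw [e5 (imp z x1) z z]
      _ = (imp z x1) := by rw [hInv (imp z x1)]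
  have e15 : ∀ x1 x2 : A, (imp (imp z x1) x2) = (imp (imp x2 x1) x2) := by
    intro x1 x2
    calc (imp (imp z x1) x2)
      _ = (imp (imp (imp (imp x2 z) z) (imp (imp x1 x2) z)) z) := by rw [hI z x1 x2]
      _ = (imp (imp (imp (imp x2 z) (imp (imp x2 z) z)) (imp (imp x1 x2) z)) z) := by rw [e13 (imp x2 z)]
      _ = (imp (imp (imp (imp x2 z) z) x1) x2) := by rw [hI (imp (imp x2 z) z) x1 x2]
      _ = (imp (imp x2 x1) x2) := by rw [hInv x2]
  have e25 : ∀ x1 : A, (imp (imp z x1) (imp z z)) = (imp x1 (imp z z)) := by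
    intro x1
    calc (imp (imp z x1) (imp z z))
      _ = (imp (imp (imp (imp z x1) (imp z z)) z) z) := by rw [hInv (imp (imp z x1) (imp z z))]
      _ = (imp (imp (imp x1 (imp z z)) z) z) := by rw [e11 x1]
      _ = (imp x1 (imp z z)) := by rw [hInv (imp x1 (imp z z))]
  have e34 : ∀ x1 : A, (imp (imp x1 (imp z z)) (imp z x1)) = (imp z x1) := by
    intro x1
    calc (imp (imp x1 (imp z z)) (imp z x1))
      _ = (imp (imp (imp z x1) (imp z z)) (imp z x1)) := by rw [e25 x1]
      _ = (imp (imp z (imp z z)) (imp z x1)) := by rw [e15 (imp z z) (imp z x1)]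
      _ = (imp (imp z z) (imp z x1)) := by rw [e12]
      _ = (imp (imp (imp z x1) z) (imp z x1)) := by rw [e15 z (imp z x1)]
      _ = (imp (imp (imp z x1) z) (imp (imp (imp z x1) z) z)) := by rw [hInv (imp z x1)]
      _ = (imp (imp (imp z x1) z) z) := by rw [e13 (imp (imp z x1) z)]
      _ = (imp z x1) := by rw [hInv (imp z x1)]
  have e42 : ∀ x1 x2 : A, (imp (imp (imp x1 x2) x1) z) = (imp (imp x2 x1) (imp x1 z)) := by
    intro x1 x2
    calc (imp (imp (imp x1 x2) x1) z)
      _ = (imp (imp (imp x1 x2) (imp (imp x1 z) z)) z) := by rw [hInv x1]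
      _ = (imp (imp (imp x1 x2) (imp (imp x1 (imp x1 z)) z)) z) := by rw [e13 x1]
      _ = (imp (imp (imp (imp (imp x1 z) z) x2) (imp (imp x1 (imp x1 z)) z)) z) := by rw [hInv x1]
      _ = (imp (imp x2 x1) (imp x1 z)) := by rw [hI x2 x1 (imp x1 z)]
  have e45 : ∀ x1 x2 : A, (imp (imp z x1) (imp (imp x2 x1) z)) = (imp (imp x2 x1) z) := by
    intro x1 x2
    calc (imp (imp z x1) (imp (imp x2 x1) z))
      _ = (imp (imp (imp x1 z) (imp z z)) (imp (imp x2 x1) z)) := by rw [e14 x1]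
      _ = (imp (imp (imp (imp z z) x2) x1) z) := by rw [e3 x1 (imp z z) x2]
      _ = (imp (imp (imp (imp z z) x2) (imp (imp x1 z) z)) z) := by rw [hInv x1]
      _ = (imp (imp x2 x1) z) := by rw [hI x2 x1 z]
  have e46 : ∀ x1 x2 x3 : A, (imp (imp x1 (imp x2 x3)) x2) = (imp (imp x1 (imp z x3)) x2) := by
    intro x1 x2 x3
    calc (imp (imp x1 (imp x2 x3)) x2)
      _ = (imp (imp (imp (imp x2 z) x1) (imp (imp (imp x2 x3) x2) z)) z) := by rw [hI x1 (imp x2 x3) x2]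
      _ = (imp (imp (imp (imp x2 z) x1) (imp (imp (imp z x3) x2) z)) z) := by rw [e15 x3 x2]
      _ = (imp (imp x1 (imp z x3)) x2) := by rw [hI x1 (imp z x3) x2]
  have e47 : ∀ x1 : A, (imp (imp x1 z) (imp z x1)) = (imp z x1) := by
    intro x1
    calc (imp (imp x1 z) (imp z x1))
      _ = (imp (imp (imp (imp x1 z) z) z) (imp z x1)) := by rw [hInv (imp x1 z)]
      _ = (imp (imp (imp (imp z z) x1) (imp (imp z z) z)) (imp z x1)) := by rw [e3 z x1 z]
      _ = (imp (imp (imp (imp z z) x1) z) (imp z x1)) := by rw [e5 (imp (imp z z) x1) z (imp z x1)]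
      _ = (imp (imp x1 (imp (imp z x1) z)) (imp z x1)) := by rw [e9 x1 z]
      _ = (imp (imp x1 (imp z z)) (imp z x1)) := by rw [e46 x1 (imp z x1) z]
      _ = (imp z x1) := by rw [e34 x1]
  have e48 : ∀ x1 x2 : A, (imp (imp (imp z x1) x2) x1) = (imp x2 x1) := by
    intro x1 x2
    calc (imp (imp (imp z x1) x2) x1)
      _ = (imp (imp (imp (imp x1 z) (imp z x1)) (imp (imp x2 x1) z)) z) := by rw [hI (imp z x1) x2 x1]
      _ = (imp (imp (imp z x1) (imp (imp x2 x1) z)) z) := by rw [e47 x1]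
      _ = (imp (imp (imp x2 x1) z) z) := by rw [e45 x1 x2]
      _ = (imp x2 x1) := by rw [hInv (imp x2 x1)]
  have e51 : ∀ x1 x2 x3 : A, (imp (imp (imp x1 x2) x1) x3) = (imp (imp (imp z x2) x1) x3) := by
    intro x1 x2 x3
    calc (imp (imp (imp x1 x2) x1) x3)
      _ = (imp (imp (imp z x2) x1) x3) := by rw [e15 x2 x1]
  have e79 : ∀ x1 x2 x3 : A, (imp (imp x1 (imp (imp z x2) x3)) x2) = (imp (imp x1 x3) x2) := by
    intro x1 x2 x3
    calc (imp (imp x1 (imp (imp z x2) x3)) x2)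
      _ = (imp (imp (imp (imp x2 z) x1) (imp (imp (imp (imp z x2) x3) x2) z)) z) := by rw [hI x1 (imp (imp z x2) x3) x2]
      _ = (imp (imp (imp (imp x2 z) x1) (imp (imp x3 x2) z)) z) := by rw [e48 x2 x3]
      _ = (imp (imp x1 x3) x2) := by rw [hI x1 x3 x2]
  have e226 : ∀ x1 x2 x3 : A, (imp x1 (imp (imp z x2) x3)) = (imp x1 (imp (imp x3 x2) x3)) := by
    intro x1 x2 x3
    calc (imp x1 (imp (imp z x2) x3))
      _ = (imp x1 (imp (imp x3 x2) x3)) := by rw [e15 x2 x3]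
  have e245 : ∀ x1 x2 x3 : A, (imp (imp (imp (imp z x1) x2) x3) z) = (imp (imp (imp (imp x2 x1) x2) x3) z) := by
    intro x1 x2 x3
    calc (imp (imp (imp (imp z x1) x2) x3) z)
      _ = (imp (imp (imp (imp x2 x1) x2) x3) z) := by rw [e51 x2 x1 x3]
  have e276 : ∀ x1 x2 : A, (imp (imp (imp z x1) x2) (imp (imp z x2) x1)) = (imp x2 (imp (imp z x2) x1)) := by
    intro x1 x2
    calc (imp (imp (imp z x1) x2) (imp (imp z x2) x1))
      _ = (imp (imp (imp z (imp (imp z x2) x1)) x2) (imp (imp z x2) x1)) := by rw [e79 z x2 x1]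
      _ = (imp x2 (imp (imp z x2) x1)) := by rw [e48 (imp (imp z x2) x1) x2]
  have e277 : ∀ x1 x2 : A, (imp (imp x1 (imp (imp z x1) x2)) z) = (imp (imp x1 x2) z) := by
    intro x1 x2
    calc (imp (imp x1 (imp (imp z x1) x2)) z)
      _ = (imp (imp (imp (imp z x2) x1) (imp (imp z x1) x2)) z) := by rw [e276 x2 x1]
      _ = (imp (imp (imp (imp x1 x2) x1) (imp (imp z x1) x2)) z) := by rw [e245 x2 x1 (imp (imp z x1) x2)]
      _ = (imp (imp x1 (imp (imp x2 z) z)) (imp (imp x1 x2) z)) := by rw [e4 x1 x2 x1 z]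
      _ = (imp (imp x1 x2) (imp (imp x1 x2) z)) := by rw [hInv x2]
      _ = (imp (imp x1 x2) z) := by rw [e13 (imp x1 x2)]
  have e278 : ∀ x1 x2 : A, (imp x1 (imp (imp z x1) x2)) = (imp x1 x2) := by
    intro x1 x2
    calc (imp x1 (imp (imp z x1) x2))
      _ = (imp (imp (imp x1 (imp (imp z x1) x2)) z) z) := by rw [hInv (imp x1 (imp (imp z x1) x2))]
      _ = (imp (imp (imp x1 x2) z) z) := by rw [e277 x1 x2]
      _ = (imp x1 x2) := by rw [hInv (imp x1 x2)]
  have e279 : ∀ x1 x2 : A, (imp x1 (imp (imp x2 x1) x2)) = (imp x1 x2) := by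
    intro x1 x2
    calc (imp x1 (imp (imp x2 x1) x2))
      _ = (imp x1 (imp (imp z x1) x2)) := by rw [e226 x1 x1 x2]
      _ = (imp x1 x2) := by rw [e278 x1 x2]
  exact e279
end

section
/- If an implication zroupoid satisfies the identity x'' = y'' (for all x, y), then it satisfies x'' = 0, (x → y)' = 0, and (x → y) → z = 0. -/
theorem stmt16 (A : Type*) (imp : A → A → A) (z : A)
    (hI : ∀ x y w : A, imp (imp x y) w = imp (imp (imp (imp w z) x) (imp (imp y w) z)) z)
    (hI0 : imp (imp z z) z = z)
    (h : ∀ x y : A, imp (imp x z) z = imp (imp y z) z) :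
    (∀ x : A, imp (imp x z) z = z) ∧ (∀ x y : A, imp (imp x y) z = z) ∧
    (∀ x y w : A, imp (imp x y) w = z) := by
  have h1 : ∀ x : A, imp (imp x z) z = z := fun x => (h x z).trans hI0
  have h2 : ∀ x y : A, imp (imp x y) z = z := by
    intro x y
    rw [hI, h1, h1]
  have h3 : ∀ x y w : A, imp (imp x y) w = z := by
    intro x y w
    rw [hI, h2]
  exact ⟨h1, h2, h3⟩
end

section
/- Every simple implication zroupoid with at least 3 elements satisfies x'' = x. -/
theorem stmt18 (A : Type*) (imp : A → A → A) (z : A)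
    (hI : ∀ x y w : A, imp (imp x y) w = imp (imp (imp (imp w z) x) (imp (imp y w) z)) z)
    (hI0 : imp (imp z z) z = z)
    (hsimple : ∀ r : A → A → Prop, Equivalence r →
      (∀ a b c d : A, r a b → r c d → r (imp a c) (imp b d)) →
      (∀ a b : A, r a b ↔ a = b) ∨ (∀ a b : A, r a b))
    (hcard : ∃ a b c : A, a ≠ b ∧ a ≠ c ∧ b ≠ c) :
    ∀ x : A, imp (imp x z) z = x := by
  -- key equational lemmas
  have A2 : ∀ a : A, (imp (imp a z) z) = (imp (imp (imp (imp z z) a) z) z) := fun a =>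
    Eq.trans (hI a z z) ((congrArg (fun t => imp t z) ((congrArg (imp (imp (imp z z) a)) (hI0)))))
  have A3 : ∀ a b : A, (imp (imp a b) z) = (imp (imp (imp (imp z z) a) (imp (imp b z) z)) z) := fun a b =>
    hI a b z
  have A4 : ∀ a : A, (imp (imp z a) z) = (imp (imp z (imp (imp a z) z)) z) := fun a =>
    Eq.trans (hI z a z) ((congrArg (fun t => imp t z) ((congrArg (fun t => imp t (imp (imp a z) z)) (hI0)))))
  have C1 : (imp (imp z z) (imp z z)) = (imp z z) :=
    Eq.trans (Eq.trans (Eq.trans (Eq.trans (Eq.trans (Eq.trans (Eq.trans (Eq.trans (Eq.trans (Eq.trans (hI z z (imp z z)) ((congrArg (fun t => imp t z) ((congrArg (fun t => imp t (imp (imp z (imp z z)) z)) ((congrArg (fun t => imp t z) (hI0)))))))) (hI (imp z z) (imp (imp z (imp z z)) z) z)) ((congrArg (fun t => imp t z) ((congrArg (imp (imp (imp z z) (imp z z))) (A2 (imp (imp z (imp z z)) z))))))) ((congrArg (fun t => imp t z) ((congrArg (imp (imp (imp z z) (imp z z))) ((congrArg (fun t => imp t z) ((congrArg (fun t => imp t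 z) ((congrArg (fun t => imp t (imp (imp z (imp z z)) z)) ((congrArg (fun t => imp t z) ((hI0).symm)))))))))))))) ((congrArg (fun t => imp t z) ((congrArg (imp (imp (imp z z) (imp z z))) ((congrArg (fun t => imp t z) ((hI z z (imp z z)).symm)))))))) (hI (imp (imp z z) (imp z z)) (imp (imp (imp z z) (imp z z)) z) z)) ((congrArg (fun t => imp t z) ((congrArg (imp (imp (imp z z) (imp (imp z z) (imp z z)))) ((congrArg (fun t => imp t z) ((A2 (imp z z)).symm)))))))) ((hI (imp (imp z z) (imp z z)) (imp (imp z z) z) z).symm)) ((hI (imp z z) z z).symm)) ((congrArg (fun t => imp t z) (hI0)))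
  have C7 : ∀ a : A, (imp (imp (imp a z) z) z) = (imp (imp (imp z z) a) z) := fun a =>
    Eq.trans (Eq.trans (Eq.trans (Eq.trans (Eq.trans (Eq.trans ((congrArg (fun t => imp t z) (A2 a))) (A2 (imp (imp (imp z z) a) z))) ((congrArg (fun t => imp t z) ((congrArg (fun t => imp t z) ((congrArg (fun t => imp t (imp (imp (imp z z) a) z)) ((C1).symm)))))))) ((congrArg (fun t => imp t z) ((congrArg (fun t => imp t z) ((congrArg (imp (imp (imp z z) (imp z z))) ((congrArg (fun t => imp t z) (hI z z a)))))))))) ((congrArg (fun t => imp t z) ((hI (imp z z) (imp (imp (imp a z) z) (imp (imp z a) z)) z).symm)))) ((A2 (imp (imp (imp a z) z) (imp (imp z a) z))).symm)) ((congrArg (fun t => imp t z) ((hI z z a).symm)))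
  have T4 : ∀ a : A, imp (imp (imp (imp a z) z) z) z = imp (imp a z) z := fun a =>
    Eq.trans (congrArg (fun t => imp t z) (C7 a)) (A2 a).symm
  have M : ∀ a : A, imp (imp z z) (imp (imp a z) z) = imp (imp z z) a := by
    intro a
    calc imp (imp z z) (imp (imp a z) z)
        = imp (imp (imp (imp (imp (imp a z) z) z) z)
            (imp (imp z (imp (imp a z) z)) z)) z := hI z z (imp (imp a z) z)
      _ = imp (imp (imp (imp a z) z) (imp (imp z (imp (imp a z) z)) z)) z := by rw [T4 a]
      _ = imp (imp (imp (imp a z) z) (imp (imp z a) z)) z := by rw [← A4 a]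
      _ = imp (imp z z) a := (hI z z a).symm
  have Ka : ∀ a b : A, imp (imp (imp (imp a z) z) b) z = imp (imp a b) z := by
    intro a b
    calc imp (imp (imp (imp a z) z) b) z
        = imp (imp (imp (imp z z) (imp (imp a z) z)) (imp (imp b z) z)) z :=
          A3 (imp (imp a z) z) b
      _ = imp (imp (imp (imp z z) a) (imp (imp b z) z)) z := by rw [M a]
      _ = imp (imp a b) z := (A3 a b).symm
  have Kb : ∀ a b : A, imp (imp a (imp (imp b z) z)) z = imp (imp a b) z := by
    intro a b
    calc imp (imp a (imp (imp b z) z)) z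
        = imp (imp (imp (imp z z) a) (imp (imp (imp (imp b z) z) z) z)) z :=
          A3 a (imp (imp b z) z)
      _ = imp (imp (imp (imp z z) a) (imp (imp b z) z)) z := by rw [T4 b]
      _ = imp (imp a b) z := (A3 a b).symm
  -- the double-negation kernel congruence
  set r : A → A → Prop := fun a b => imp (imp a z) z = imp (imp b z) z with hr
  have requiv : Equivalence r := ⟨fun _ => rfl, fun h => h.symm, fun h1 h2 => h1.trans h2⟩
  have rcompat : ∀ a b c d : A, r a b → r c d → r (imp a c) (imp b d) := by
    intro a b c d hab hcd
    have hab' : imp (imp a z) z = imp (imp b z) z := hab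
    have hcd' : imp (imp c z) z = imp (imp d z) z := hcd
    have h1 : imp (imp a c) z = imp (imp b d) z := by
      rw [← Ka a c, hab', Ka b c, ← Kb b c, hcd', Kb b d]
    exact congrArg (fun t => imp t z) h1
  rcases hsimple r requiv rcompat with hdiag | hfull
  · intro x
    exact (hdiag (imp (imp x z) z) x).mp (T4 x)
  · -- degenerate: x'' = z for all x
    exfalso
    have hz2 : ∀ x : A, imp (imp x z) z = z := by
      intro x
      have h := hfull x z
      simp only [hr] at h
      rw [h, hI0]
    have D0 : imp z z = z := by
      have h := hz2 (imp z z)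
      rw [hI0] at h
      exact h
    have P1 : ∀ x y : A, imp (imp x y) z = z := by
      intro x y
      calc imp (imp x y) z
          = imp (imp (imp (imp z z) x) (imp (imp y z) z)) z := hI x y z
        _ = imp (imp (imp z x) z) z := by rw [D0, hz2 y]
        _ = z := hz2 (imp z x)
    have P3 : ∀ x y w : A, imp (imp x y) w = z := by
      intro x y w
      have hP2 : imp (imp w z) x = z := by
        calc imp (imp w z) x
            = imp (imp (imp (imp x z) w) (imp (imp z x) z)) z := hI w z x
          _ = imp (imp (imp (imp x z) w) z) z := by rw [P1 z x]
          _ = z := hz2 (imp (imp x z) w)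
      calc imp (imp x y) w
          = imp (imp (imp (imp w z) x) (imp (imp y w) z)) z := hI x y w
        _ = imp (imp z z) z := by rw [hP2, P1 y w]
        _ = z := hI0
    have hKz : ∀ w : A, imp z w = z := by
      intro w
      have h := P3 z z w
      rw [D0] at h
      exact h
    -- second congruence: collapse everything with constant left action
    set r2 : A → A → Prop := fun a b => a = b ∨ ((∀ w, imp a w = z) ∧ (∀ w, imp b w = z))
      with hr2
    have r2equiv : Equivalence r2 := by
      constructor
      · intro a; exact Or.inl rfl
      · rintro a b (h | ⟨h1, h2⟩)
        · exact Or.inl h.symm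
        · exact Or.inr ⟨h2, h1⟩
      · rintro a b c (h | ⟨h1, h2⟩) (h' | ⟨h1', h2'⟩)
        · exact Or.inl (h.trans h')
        · subst h; exact Or.inr ⟨h1', h2'⟩
        · subst h'; exact Or.inr ⟨h1, h2⟩
        · exact Or.inr ⟨h1, h2'⟩
    have r2compat : ∀ a b c d : A, r2 a b → r2 c d → r2 (imp a c) (imp b d) := by
      intro a b c d _ _
      exact Or.inr ⟨fun w => P3 a c w, fun w => P3 b d w⟩
    have hconst : ∀ x y : A, imp x y = z := by
      rcases hsimple r2 r2equiv r2compat with hdiag2 | hfull2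
      · intro x y
        have : r2 z (imp x y) := Or.inr ⟨hKz, fun w => P3 x y w⟩
        exact ((hdiag2 z (imp x y)).mp this).symm
      · intro x y
        obtain ⟨a0, b0, _, hab, _, _⟩ := hcard
        have hx : ∀ w : A, imp x w = z := by
          by_cases hxa : x = a0
          · rcases hfull2 x b0 with h | ⟨h1, _⟩
            · exact absurd (hxa ▸ h) hab
            · exact h1
          · rcases hfull2 x a0 with h | ⟨h1, _⟩
            · exact absurd h hxa
            · exact h1
        exact hx y
    -- final: with constant imp, any equivalence is a congruence
    obtain ⟨a0, b0, c0, hab, hac, hbc⟩ := hcard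
    set s : A → A → Prop := fun u v => u = v ∨ (u = a0 ∧ v = b0) ∨ (u = b0 ∧ v = a0)
      with hs
    have sequiv : Equivalence s := by
      constructor
      · intro u; exact Or.inl rfl
      · rintro u v (h | ⟨h1, h2⟩ | ⟨h1, h2⟩)
        · exact Or.inl h.symm
        · exact Or.inr (Or.inr ⟨h2, h1⟩)
        · exact Or.inr (Or.inl ⟨h2, h1⟩)
      · rintro u v w (h | ⟨h1, h2⟩ | ⟨h1, h2⟩) (h' | ⟨h1', h2'⟩ | ⟨h1', h2'⟩) <;>
          subst_vars <;> simp_all <;> tauto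
    have scompat : ∀ a b c d : A, s a b → s c d → s (imp a c) (imp b d) := by
      intro a b c d _ _
      exact Or.inl (by rw [hconst a c, hconst b d])
    rcases hsimple s sequiv scompat with hdiag3 | hfull3
    · exact hab ((hdiag3 a0 b0).mp (Or.inr (Or.inl ⟨rfl, rfl⟩)))
    · rcases hfull3 a0 c0 with h | ⟨_, h2⟩ | ⟨h1, _⟩
      · exact hac h
      · exact hbc h2.symm
      · exact hab h1
end
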